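/- arXiv:1903.01291 — 4 statements merged into one kernel-verified Lean document; each statement's English description precedes it below -/
import Mathlib

section
/- Let B be a simple bipartite graph with vertex bipartition V(B) = W ⊎ U, let G be the half-square of B, and let D = (T, β_D) be a rooted tree decomposition of B. Define β_{D'}(t) = (β_D(t) ∩ W) ∪ ⋃_{s ∈ β_D(t) ∩ U} (N_B(s) ∩ γ_D(t)) for every node t of T, where γ_D(t) is the union of the bags β_D(t') over t and all descendants t' of t. Then D' = (T, β_{D'}) is a tree decomposition of G. -/
open SimpleGraph

section Defs

variable {V : Type*} {ι : Type*}

/-- `W, U` is a bipartition of the simple graph `B`. -/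
def IsBipartition (B : SimpleGraph V) (W U : Set V) : Prop :=
  (∀ v, v ∈ W ∨ v ∈ U) ∧ (∀ v, ¬(v ∈ W ∧ v ∈ U)) ∧
    ∀ ⦃a b⦄, B.Adj a b → (a ∈ W ∧ b ∈ U) ∨ (a ∈ U ∧ b ∈ W)

/-- The half-square of `B` on side `W`: two distinct vertices of `W` are adjacent
iff they have a common neighbor in `B`. -/
def halfSquare (B : SimpleGraph V) (W : Set V) : SimpleGraph V where
  Adj a b := a ≠ b ∧ a ∈ W ∧ b ∈ W ∧ ∃ s, B.Adj a s ∧ B.Adj b s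
  symm := by
    constructor
    rintro a b ⟨hne, ha, hb, s, h1, h2⟩
    exact ⟨hne.symm, hb, ha, s, h2, h1⟩
  loopless := by constructor; rintro a ⟨hne, _⟩; exact hne rfl

/-- Tree decomposition of the graph `H` with vertex set `S`, over the tree `T`. -/
structure IsTreeDecompOn (H : SimpleGraph V) (S : Set V) (T : SimpleGraph ι)
    (β : ι → Set V) : Prop where
  covers : ∀ v ∈ S, ∃ t, v ∈ β t
  edge_mem : ∀ ⦃u v⦄, H.Adj u v → ∃ t, u ∈ β t ∧ v ∈ β t
  conn : ∀ v ∈ S, (T.induce {t | v ∈ β t}).Connected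

/-- `t'` is a descendant of `t` (inclusively) in the tree `T` rooted at `r`:
`t` lies on every path from `t'` to the root. -/
def Desc (T : SimpleGraph ι) (r : ι) (t t' : ι) : Prop :=
  ∀ p : T.Walk t' r, p.IsPath → t ∈ p.support

/-- `γ(t)`: union of the bags of `t` and of all its descendants. -/
def gammaSet (T : SimpleGraph ι) (r : ι) (β : ι → Set V) (t : ι) : Set V :=
  ⋃ t' ∈ {t' | Desc T r t t'}, β t'

/-- The bag of the derived decomposition. -/
def derivedBag (B : SimpleGraph V) (W U : Set V) (T : SimpleGraph ι) (r : ι)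
    (β : ι → Set V) (t : ι) : Set V :=
  (β t ∩ W) ∪ ⋃ s ∈ β t ∩ U, B.neighborSet s ∩ gammaSet T r β t

def originalSet (B : SimpleGraph V) (W U : Set V) (T : SimpleGraph ι) (r : ι)
    (β : ι → Set V) (t : ι) : Set V :=
  β t ∩ derivedBag B W U T r β t

def fakeSet (B : SimpleGraph V) (W U : Set V) (T : SimpleGraph ι) (r : ι)
    (β : ι → Set V) (t : ι) : Set V :=
  derivedBag B W U T r β t \ β t

def cliquesAt (B : SimpleGraph V) (U : Set V) (β : ι → Set V) (t : ι) : Set (Set V) :=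
  {K | ∃ s ∈ β t ∩ U, K = B.neighborSet s}

def IsChild (T : SimpleGraph ι) (r : ι) (t t' : ι) : Prop :=
  T.Adj t t' ∧ Desc T r t t'

def IsLeafNode (T : SimpleGraph ι) (r : ι) (β : ι → Set V) (t : ι) : Prop :=
  (∀ t', ¬ IsChild T r t t') ∧ β t = ∅

def IsForgetNode (T : SimpleGraph ι) (r : ι) (β : ι → Set V) (w : V) (t : ι) : Prop :=
  ∃ t', IsChild T r t t' ∧ (∀ t'', IsChild T r t t'' → t'' = t') ∧
    w ∈ β t' ∧ β t = β t' \ {w}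

def IsIntroduceNode (T : SimpleGraph ι) (r : ι) (β : ι → Set V) (w : V) (t : ι) : Prop :=
  ∃ t', IsChild T r t t' ∧ (∀ t'', IsChild T r t t'' → t'' = t') ∧
    w ∈ β t ∧ β t \ {w} = β t'

def IsJoinNode (T : SimpleGraph ι) (r : ι) (β : ι → Set V) (t : ι) : Prop :=
  ∃ t₁ t₂, t₁ ≠ t₂ ∧ IsChild T r t t₁ ∧ IsChild T r t t₂ ∧
    (∀ t'', IsChild T r t t'' → t'' = t₁ ∨ t'' = t₂) ∧ β t = β t₁ ∧ β t = β t₂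

/-- A nice (rooted) tree decomposition. -/
def IsNice (T : SimpleGraph ι) (r : ι) (β : ι → Set V) : Prop :=
  β r = ∅ ∧ ∀ t, IsLeafNode T r β t ∨ (∃ w, IsForgetNode T r β w t) ∨
    (∃ w, IsIntroduceNode T r β w t) ∨ IsJoinNode T r β t

/-- `E(X)`: edges of `G` with both endpoints in `X`. -/
def edgesIn (G : SimpleGraph V) (X : Set V) : Set (Sym2 V) :=
  {e | e ∈ G.edgeSet ∧ ∀ x ∈ e, x ∈ X}

end Defs

/-!
A vertex `v ∈ W` enters the new bag of `t` either because `v ∈ β t`, or because some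
`s ∈ β t ∩ U` adjacent to `v` has `v` in a bag below `t`. For an edge `ab` of the half-square
with common neighbour `s`, take a common ancestor, on the path of bags containing `s`, of a bag
containing `sa` and a bag containing `sb`. For connectivity, a node `t` of the second kind is
joined to a bag containing `s` and `v` by the path of bags containing `s`; every node of this
path is an ancestor of one of its ends, so it still sees `v` below it.
-/

section RootedTree

variable {ι : Type*} {T : SimpleGraph ι} {r : ι}

lemma desc_iff_mem_support (hT : T.IsTree) {t t' : ι} {p : T.Walk t' r} (hp : p.IsPath) :
    Desc T r t t' ↔ t ∈ p.support :=
  ⟨fun h => h p hp, fun h _ hq => (hT.existsUnique_path t' r).unique hq hp ▸ h⟩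

lemma desc_refl (t : ι) : Desc T r t t := fun p _ => p.start_mem_support

lemma desc_trans {t t' t'' : ι} (h₁ : Desc T r t t') (h₂ : Desc T r t' t'') :
    Desc T r t t'' := by
  classical
  intro p hp
  have ht' : t' ∈ p.support := h₂ p hp
  exact p.support_dropUntil_subset_support ht' (h₁ _ (hp.dropUntil ht'))

lemma desc_or_desc_of_adj (hT : T.IsTree) {a c : ι} (h : T.Adj a c) :
    Desc T r c a ∨ Desc T r a c := by
  obtain ⟨p, hp⟩ := (hT.existsUnique_path a r).exists
  by_cases hc : c ∈ p.support
  · exact Or.inl ((desc_iff_mem_support hT hp).2 hc)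
  · exact Or.inr ((desc_iff_mem_support hT (hp.cons (h := h.symm) hc)).2 (by simp))

lemma desc_total_of_desc (hT : T.IsTree) {x y c : ι} (hx : Desc T r x c) (hy : Desc T r y c) :
    Desc T r x y ∨ Desc T r y x := by
  classical
  obtain ⟨p, hp⟩ := (hT.existsUnique_path c r).exists
  have hxp := hx p hp
  have hyp := hy p hp
  rcases List.suffix_or_suffix_of_suffix (p.support_dropUntil_suffix_support hxp)
      (p.support_dropUntil_suffix_support hyp) with h | h
  · exact Or.inl ((desc_iff_mem_support hT (hp.dropUntil hyp)).2
      (h.subset (p.dropUntil x hxp).start_mem_support))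
  · exact Or.inr ((desc_iff_mem_support hT (hp.dropUntil hxp)).2
      (h.subset (p.dropUntil y hyp).start_mem_support))

lemma exists_common_ancestor_mem_support (hT : T.IsTree) {a b : ι} (q : T.Walk a b) :
    ∃ m ∈ q.support, Desc T r m a ∧ Desc T r m b := by
  induction q with
  | nil => exact ⟨_, Walk.start_mem_support _, desc_refl _, desc_refl _⟩
  | cons hac q ih =>
    obtain ⟨m, hm, hmc, hmb⟩ := ih
    have hm' : m ∈ (Walk.cons hac q).support := List.mem_cons_of_mem _ hm
    rcases desc_or_desc_of_adj hT hac with hca | hac'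
    · exact ⟨m, hm', desc_trans hmc hca, hmb⟩
    · rcases desc_total_of_desc hT hac' hmc with ham | hma
      · exact ⟨_, Walk.start_mem_support _, desc_refl _, desc_trans ham hmb⟩
      · exact ⟨m, hm', hma, hmb⟩

lemma desc_or_desc_of_mem_support (hT : T.IsTree) {a b u : ι} {q : T.Walk a b}
    (hq : q.IsPath) (hu : u ∈ q.support) : Desc T r u a ∨ Desc T r u b := by
  classical
  obtain ⟨pa, hpa⟩ := (hT.existsUnique_path a r).exists
  obtain ⟨pb, hpb⟩ := (hT.existsUnique_path b r).exists
  rw [(hT.existsUnique_path a b).unique hq (pa.append pb.reverse).bypass_isPath] at hu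
  rcases (Walk.mem_support_append_iff _ _).1 (Walk.support_bypass_subset_support _ hu) with h | h
  · exact Or.inl ((desc_iff_mem_support hT hpa).2 h)
  · rw [Walk.support_reverse, List.mem_reverse] at h
    exact Or.inr ((desc_iff_mem_support hT hpb).2 h)

end RootedTree

section Decomposition

variable {V : Type*} {ι : Type*} {T : SimpleGraph ι} {r : ι} {β : ι → Set V}

lemma subset_gammaSet_of_desc {t t' : ι} (h : Desc T r t t') : β t' ⊆ gammaSet T r β t :=
  fun _ hv => Set.mem_biUnion h hv

lemma gammaSet_mono_of_desc {t t' : ι} (h : Desc T r t t') :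
    gammaSet T r β t' ⊆ gammaSet T r β t := by
  simp only [gammaSet, Set.iUnion_subset_iff]
  exact fun t'' h' => subset_gammaSet_of_desc (desc_trans h h')

lemma IsTreeDecompOn.exists_isPath_of_mem {H : SimpleGraph V} {S : Set V}
    (hD : IsTreeDecompOn H S T β) {v : V} (hv : v ∈ S) {t₁ t₂ : ι} (h₁ : v ∈ β t₁)
    (h₂ : v ∈ β t₂) : ∃ q : T.Walk t₁ t₂, q.IsPath ∧ ∀ u ∈ q.support, v ∈ β u := by
  classical
  obtain ⟨w⟩ := (hD.conn v hv).preconnected ⟨t₁, h₁⟩ ⟨t₂, h₂⟩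
  let w' : T.Walk t₁ t₂ := w.map (Embedding.induce _).toHom
  refine ⟨w'.bypass, w'.bypass_isPath, fun u hu => ?_⟩
  obtain ⟨y, -, rfl⟩ := List.mem_map.1
    (Walk.support_map _ w ▸ w'.support_bypass_subset_support hu)
  exact y.2

lemma IsTreeDecompOn.exists_mem_bag_mem_gammaSet {H : SimpleGraph V} {S : Set V}
    (hT : T.IsTree) (hD : IsTreeDecompOn H S T β) {s a b : V} (hs : s ∈ S)
    (ha : H.Adj s a) (hb : H.Adj s b) :
    ∃ t, s ∈ β t ∧ a ∈ gammaSet T r β t ∧ b ∈ gammaSet T r β t := by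
  obtain ⟨t₁, hs₁, ha₁⟩ := hD.edge_mem ha
  obtain ⟨t₂, hs₂, hb₂⟩ := hD.edge_mem hb
  obtain ⟨q, -, hq⟩ := hD.exists_isPath_of_mem hs hs₁ hs₂
  obtain ⟨m, hm, hm₁, hm₂⟩ := exists_common_ancestor_mem_support (r := r) hT q
  exact ⟨m, hq m hm, subset_gammaSet_of_desc hm₁ ha₁, subset_gammaSet_of_desc hm₂ hb₂⟩

end Decomposition

section HalfSquare

variable {V : Type*} {ι : Type*} {B : SimpleGraph V} {W U : Set V} {T : SimpleGraph ι} {r : ι}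
  {β : ι → Set V}

lemma IsBipartition.mem_right_of_adj (h : IsBipartition B W U) {a b : V} (ha : a ∈ W)
    (hab : B.Adj a b) : b ∈ U :=
  (h.2.2 hab).elim (·.2) fun h' => (h.2.1 a ⟨ha, h'.1⟩).elim

lemma mem_derivedBag_of_mem {v : V} {t : ι} (hv : v ∈ β t) (hvW : v ∈ W) :
    v ∈ derivedBag B W U T r β t :=
  Or.inl ⟨hv, hvW⟩

lemma mem_derivedBag_of_adj {s v : V} {t : ι} (hs : s ∈ β t) (hsU : s ∈ U) (hsv : B.Adj s v)
    (hv : v ∈ gammaSet T r β t) : v ∈ derivedBag B W U T r β t :=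
  Or.inr (Set.mem_biUnion ⟨hs, hsU⟩ ⟨hsv, hv⟩)

lemma exists_walk_to_bag_of_mem_derivedBag (hT : T.IsTree)
    (hD : IsTreeDecompOn B Set.univ T β) {v : V} {t : ι} (ht : v ∈ derivedBag B W U T r β t) :
    ∃ u, v ∈ β u ∧ ∃ q : T.Walk t u, ∀ x ∈ q.support, v ∈ derivedBag B W U T r β x := by
  obtain ⟨hv, -⟩ | hmem := id ht
  · exact ⟨t, hv, .nil, by simpa using ht⟩
  simp only [Set.mem_iUnion, Set.mem_inter_iff, mem_neighborSet] at hmem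
  obtain ⟨s, ⟨hs, hsU⟩, hsv, hvγ⟩ := hmem
  obtain ⟨u, hsu, hvu⟩ := hD.edge_mem hsv
  obtain ⟨q, hqpath, hq⟩ := hD.exists_isPath_of_mem trivial hs hsu
  refine ⟨u, hvu, q, fun x hx => mem_derivedBag_of_adj (hq x hx) hsU hsv ?_⟩
  rcases desc_or_desc_of_mem_support hT hqpath hx with h | h
  · exact gammaSet_mono_of_desc h hvγ
  · exact subset_gammaSet_of_desc h hvu

lemma connected_induce_derivedBag (hT : T.IsTree) (hD : IsTreeDecompOn B Set.univ T β)
    {v : V} (hvW : v ∈ W) : (T.induce {t | v ∈ derivedBag B W U T r β t}).Connected := by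
  have hsub : {t | v ∈ β t} ⊆ {t | v ∈ derivedBag B W U T r β t} :=
    fun t ht => mem_derivedBag_of_mem ht hvW
  obtain ⟨t₀, ht₀⟩ := hD.covers v trivial
  refine induce_connected_of_patches t₀ (hsub ht₀) fun {t} ht => ?_
  obtain ⟨u, hu, q, hq⟩ := exists_walk_to_bag_of_mem_derivedBag hT hD ht
  exact ⟨{t | v ∈ β t} ∪ {x | x ∈ q.support}, Set.union_subset hsub hq, Or.inl ht₀,
    Or.inr q.start_mem_support, induce_union_connected (hD.conn v trivial).preconnected
      q.connected_induce_support.preconnected ⟨u, hu, q.end_mem_support⟩ _ _⟩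

end HalfSquare

/-- the derived decomposition `D'` is a tree decomposition of the
half-square `G` of `B` (whose vertex set is `W`). -/
theorem stmt_0 {V : Type*} {ι : Type*} (B : SimpleGraph V) (W U : Set V)
    (hbip : IsBipartition B W U)
    (T : SimpleGraph ι) (r : ι) (hT : T.IsTree) (β : ι → Set V)
    (hD : IsTreeDecompOn B Set.univ T β) :
    IsTreeDecompOn (halfSquare B W) W T (derivedBag B W U T r β) := by
  refine ⟨fun v hv => ?_, ?_, fun v hv => connected_induce_derivedBag hT hD hv⟩
  · obtain ⟨t, ht⟩ := hD.covers v trivial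
    exact ⟨t, mem_derivedBag_of_mem ht hv⟩
  · rintro a b ⟨-, haW, -, s, has, hbs⟩
    have hsU : s ∈ U := hbip.mem_right_of_adj haW has
    obtain ⟨t, hs, ha, hb⟩ := hD.exists_mem_bag_mem_gammaSet hT trivial has.symm hbs.symm
    exact ⟨t, mem_derivedBag_of_adj hs hsU has.symm ha,
      mem_derivedBag_of_adj hs hsU hbs.symm hb⟩
end

section
/- Let B be a simple bipartite graph with bipartition V(B) = W ⊎ U, G its half-square, D = (T, β_D) a nice tree decomposition of B, and D' = (T, β_{D'}) the derived decomposition of G. Let v ∈ W and s ∈ U with v ∈ N_B(s), and suppose the set Q = { t ∈ V(T) : v ∈ Fake(t) and s ∈ β_D(t) } is nonempty. Let x be a node of T that is a forget(v) node of D, and let y be the unique child of a node of T that is a forget(s) node of D. Then y is an ancestor of x, and Q is exactly the vertex set of the unique path in T between x and y. -/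
open SimpleGraph

/-!
The vertices `v` and `s` occupy connected subtrees of `T`, and a forget node sits right above
the top of the subtree of the forgotten vertex: `x` is an ancestor of every node whose bag
contains `v`, and `y` of every node whose bag contains `s`. Consequently `v ∈ γ(t) \ β(t)` holds
exactly for the ancestors `t` of `x`, so `Q` is the set of ancestors of `x` whose bag contains
`s`. A bag containing the edge `vs` lies below `x` and a node of `Q` lies above it, so `s ∈ β(x)`
and `y` is an ancestor of `x`. The nodes of the path from `x` to `y` are then exactly the
ancestors of `x` below `y`, and their bags all contain `s`.
-/

open SimpleGraph Walk

namespace SimpleGraph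

variable {ι : Type*} {T : SimpleGraph ι}

lemma IsAcyclic.eq_of_isPath (hT : T.IsAcyclic) {a b : ι} {p q : T.Walk a b}
    (hp : p.IsPath) (hq : q.IsPath) : p = q :=
  congrArg Subtype.val ((hT.subsingleton_path a b).elim ⟨p, hp⟩ ⟨q, hq⟩)

lemma Walk.mem_support_takeUntil_or_dropUntil [DecidableEq ι] {a b u t : ι} (p : T.Walk a b)
    (hu : u ∈ p.support) (ht : t ∈ p.support) :
    t ∈ (p.takeUntil u hu).support ∨ t ∈ (p.dropUntil u hu).support := by
  rwa [← p.take_spec hu, mem_support_append_iff] at ht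

lemma IsAcyclic.mem_of_mem_support_of_induce_connected {S : Set ι} (hT : T.IsAcyclic)
    (hS : (T.induce S).Connected) {a b t : ι} (ha : a ∈ S) (hb : b ∈ S) {p : T.Walk a b}
    (hp : p.IsPath) (ht : t ∈ p.support) : t ∈ S := by
  classical
  obtain ⟨w⟩ := hS.preconnected ⟨a, ha⟩ ⟨b, hb⟩
  let w' : T.Walk a b := w.map (Embedding.induce S).toHom
  rw [hT.eq_of_isPath hp w'.toPath.isPath] at ht
  obtain ⟨u, -, rfl⟩ :=
    List.mem_map.mp (Walk.support_map _ w ▸ w'.support_toPath_subset_support ht)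
  exact u.2

end SimpleGraph

namespace Desc

variable {ι : Type*} {T : SimpleGraph ι} {r a b c t : ι}

lemma refl (t : ι) : Desc T r t t := fun p _ => p.start_mem_support

lemma trans (h₁ : Desc T r a b) (h₂ : Desc T r b c) : Desc T r a c := by
  classical
  intro p hp
  have hb : b ∈ p.support := h₂ p hp
  exact p.support_dropUntil_subset_support hb (h₁ _ (hp.dropUntil hb))

lemma of_mem_support (hT : T.IsAcyclic) {p : T.Walk a r} (hp : p.IsPath)
    (ht : t ∈ p.support) : Desc T r t a := by
  intro q hq
  rwa [← hT.eq_of_isPath hp hq]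

lemma antisymm (hT : T.IsTree) (h₁ : Desc T r a c) (h₂ : Desc T r c a) : a = c := by
  classical
  by_contra hne
  obtain ⟨p, hp, -⟩ := hT.existsUnique_path c r
  have ha := h₁ p hp
  have hc := h₂ _ (hp.dropUntil ha)
  -- the path `c → r` would reappear as a suffix of its strictly shorter suffix `a → r`
  have hp' := hT.isAcyclic.eq_of_isPath ((hp.dropUntil ha).dropUntil hc) hp
  have hle := length_dropUntil_le_length (p.dropUntil a ha) hc
  have hlt := length_dropUntil_lt_length ha hne
  rw [hp'] at hle
  omega

lemma mem_support_of_desc (hT : T.IsTree) (h₁ : Desc T r a b) (h₂ : Desc T r c a)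
    {p : T.Walk b c} (hp : p.IsPath) : a ∈ p.support := by
  classical
  obtain ⟨q, hq, -⟩ := hT.existsUnique_path b r
  have hc : c ∈ q.support := (h₂.trans h₁) q hq
  rw [hT.isAcyclic.eq_of_isPath hp (hq.takeUntil hc)]
  rcases q.mem_support_takeUntil_or_dropUntil hc (h₁ q hq) with h | h
  · exact h
  · obtain rfl := antisymm hT (of_mem_support hT.isAcyclic (hq.dropUntil hc) h) h₂
    exact end_mem_support _

lemma of_mem_support_of_desc (hT : T.IsTree) (h : Desc T r b a) {p : T.Walk a b}
    (hp : p.IsPath) (ht : t ∈ p.support) : Desc T r t a := by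
  classical
  obtain ⟨q, hq, -⟩ := hT.existsUnique_path a r
  have hb : b ∈ q.support := h q hq
  rw [hT.isAcyclic.eq_of_isPath hp (hq.takeUntil hb)] at ht
  exact of_mem_support hT.isAcyclic hq (q.support_takeUntil_subset_support hb ht)

end Desc

section ConnectedSubtree

variable {ι : Type*} {T : SimpleGraph ι} {r x x' y z t : ι} {S : Set ι}

lemma IsChild.desc_of_desc_of_ne (hT : T.IsTree) (hx : IsChild T r x x') (hne : t ≠ x')
    (h : Desc T r t x') : Desc T r t x := by
  classical
  obtain ⟨q, hq, -⟩ := hT.existsUnique_path x' r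
  have hxq : x ∈ q.support := hx.2 q hq
  rcases q.mem_support_takeUntil_or_dropUntil hxq (h q hq) with ht | ht
  · rw [hT.isAcyclic.eq_of_isPath (hq.takeUntil hxq) (Path.singleton hx.1.symm).2] at ht
    simp only [Path.singleton_coe, support_cons, support_nil, List.mem_cons,
      List.not_mem_nil, or_false] at ht
    rcases ht with rfl | rfl
    · exact absurd rfl hne
    · exact Desc.refl t
  · exact Desc.of_mem_support hT.isAcyclic (hq.dropUntil hxq) ht

lemma IsChild.desc_of_mem (hT : T.IsTree) (hzy : IsChild T r z y)
    (hS : (T.induce S).Connected) (hy : y ∈ S) (hz : z ∉ S) (ht : t ∈ S) : Desc T r y t := by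
  classical
  obtain ⟨q, hq, -⟩ := hT.existsUnique_path t y
  have hzq : z ∉ q.support := fun h =>
    hz (hT.isAcyclic.mem_of_mem_support_of_induce_connected hS ht hy hq h)
  intro p hp
  have hzp : z ∈ p.support := by
    have := q.reverse.append p |>.support_toPath_subset_support <|
      hzy.2 _ (q.reverse.append p).toPath.isPath
    rw [mem_support_append_iff, support_reverse, List.mem_reverse] at this
    exact this.resolve_left hzq
  exact p.support_takeUntil_subset_support hzp <|
    hT.isAcyclic.mem_support_of_ne_mem_support_of_adj_of_isPath (hp.takeUntil hzp) hq
      hzy.1 hzq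

lemma IsChild.desc_of_desc_of_notMem (hT : T.IsTree) {t' : ι} (hxx' : IsChild T r x x')
    (hS : (T.induce S).Connected) (hx' : x' ∈ S) (hx : x ∉ S) (ht : t ∉ S) (ht' : t' ∈ S)
    (htt' : Desc T r t t') : Desc T r t x := by
  classical
  obtain ⟨p, hp, -⟩ := hT.existsUnique_path t' r
  have hx'p : x' ∈ p.support := hxx'.desc_of_mem hT hS hx' hx ht' p hp
  rcases p.mem_support_takeUntil_or_dropUntil hx'p (htt' p hp) with h | h
  · exact absurd (hT.isAcyclic.mem_of_mem_support_of_induce_connected hS ht' hx'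
      (hp.takeUntil hx'p) h) ht
  · exact hxx'.desc_of_desc_of_ne hT (fun h => ht (h ▸ hx'))
      (Desc.of_mem_support hT.isAcyclic (hp.dropUntil hx'p) h)

end ConnectedSubtree

section DerivedDecomposition

variable {V ι : Type*} {T : SimpleGraph ι} {r x t : ι} {β : ι → Set V} {w : V}

lemma IsForgetNode.notMem (hx : IsForgetNode T r β w x) : w ∉ β x := by
  obtain ⟨_, -, -, -, hβ⟩ := hx
  simp [hβ]

lemma IsForgetNode.mem_of_isChild {y : ι} (hx : IsForgetNode T r β w x)
    (hy : IsChild T r x y) : w ∈ β y := by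
  obtain ⟨x', -, hunique, hwx', -⟩ := hx
  rwa [hunique y hy]

lemma IsForgetNode.desc_of_mem (hT : T.IsTree) (hw : (T.induce {t | w ∈ β t}).Connected)
    (hx : IsForgetNode T r β w x) (ht : w ∈ β t) : Desc T r x t := by
  obtain ⟨x', hxx', -, hwx', -⟩ := id hx
  exact hxx'.2.trans (hxx'.desc_of_mem hT hw hwx' hx.notMem ht)

lemma IsForgetNode.notMem_and_mem_gammaSet_iff (hT : T.IsTree)
    (hw : (T.induce {t | w ∈ β t}).Connected) (hx : IsForgetNode T r β w x) :
    w ∉ β t ∧ w ∈ gammaSet T r β t ↔ Desc T r t x := by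
  obtain ⟨x', hxx', -, hwx', -⟩ := id hx
  constructor
  · rintro ⟨hwt, hγ⟩
    obtain ⟨t', htt', hwt'⟩ := Set.mem_iUnion₂.mp hγ
    exact hxx'.desc_of_desc_of_notMem hT hw hwx' hx.notMem hwt hwt' htt'
  · intro htx
    refine ⟨fun hwt => hx.notMem ?_, Set.mem_biUnion (htx.trans hxx'.2) hwx'⟩
    obtain ⟨p, hp, -⟩ := hT.existsUnique_path x' t
    exact hT.isAcyclic.mem_of_mem_support_of_induce_connected hw hwx' hwt hp
      (hxx'.2.mem_support_of_desc hT htx hp)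

lemma mem_fakeSet_iff_of_mem_neighborSet {B : SimpleGraph V} {W U : Set V} {s v : V}
    (hs : s ∈ β t ∩ U) (hv : v ∈ B.neighborSet s) :
    v ∈ fakeSet B W U T r β t ↔ v ∉ β t ∧ v ∈ gammaSet T r β t := by
  simp only [fakeSet, derivedBag, Set.mem_sdiff, Set.mem_union, Set.mem_inter_iff,
    Set.mem_iUnion]
  constructor
  · rintro ⟨h | ⟨-, -, -, hγ⟩, hvt⟩
    · exact absurd h.1 hvt
    · exact ⟨hvt, hγ⟩
  · rintro ⟨hvt, hγ⟩
    exact ⟨Or.inr ⟨s, hs, hv, hγ⟩, hvt⟩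

end DerivedDecomposition

theorem stmt_1_general {V : Type*} {ι : Type*} (B : SimpleGraph V) (W U : Set V)
    (T : SimpleGraph ι) (r : ι) (hT : T.IsTree) (β : ι → Set V)
    (hD : IsTreeDecompOn B Set.univ T β)
    (v s : V) (hsU : s ∈ U) (hvs : v ∈ B.neighborSet s)
    (hQ : {t | v ∈ fakeSet B W U T r β t ∧ s ∈ β t}.Nonempty)
    (x z y : ι) (hx : IsForgetNode T r β v x)
    (hz : IsForgetNode T r β s z) (hy : IsChild T r z y) :
    Desc T r y x ∧
      ∀ p : T.Walk x y, p.IsPath →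
        {t | v ∈ fakeSet B W U T r β t ∧ s ∈ β t} = {t | t ∈ p.support} := by
  have hv := hD.conn v trivial
  have hs := hD.conn s trivial
  have hQ_eq :
      {t | v ∈ fakeSet B W U T r β t ∧ s ∈ β t} = {t | Desc T r t x ∧ s ∈ β t} :=
    Set.ext fun t => and_congr_left fun hst =>
      (mem_fakeSet_iff_of_mem_neighborSet ⟨hst, hsU⟩ hvs).trans
        (hx.notMem_and_mem_gammaSet_iff hT hv)
  have hsy := hz.mem_of_isChild hy
  have hy_top : ∀ t, s ∈ β t → Desc T r y t := fun t =>
    hy.desc_of_mem hT hs hsy hz.notMem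
  have hsx : s ∈ β x := by
    obtain ⟨t₀, ht₀x, hst₀⟩ := hQ_eq ▸ hQ
    obtain ⟨t₁, hvt₁, hst₁⟩ := hD.edge_mem ((B.mem_neighborSet s v).mp hvs).symm
    obtain ⟨p, hp, -⟩ := hT.existsUnique_path t₁ t₀
    exact hT.isAcyclic.mem_of_mem_support_of_induce_connected hs hst₁ hst₀ hp
      ((hx.desc_of_mem hT hv hvt₁).mem_support_of_desc hT ht₀x hp)
  refine ⟨hy_top x hsx, fun p hp => hQ_eq ▸ Set.ext fun t => ⟨?_, fun ht => ?_⟩⟩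
  · rintro ⟨htx, hst⟩
    exact htx.mem_support_of_desc hT (hy_top t hst) hp
  · exact ⟨(hy_top x hsx).of_mem_support_of_desc hT hp ht,
      hT.isAcyclic.mem_of_mem_support_of_induce_connected hs hsx hsy hp ht⟩

/-- if `v ∈ N_B(s)` and `Q = {t | v ∈ Fake(t) ∧ s ∈ β_D(t)}` is
nonempty, `x` is a forget(v) node and `y` is the unique child of a forget(s)
node, then `y` is an ancestor of `x` and `Q` is the vertex set of the unique
path between `x` and `y`. -/
theorem stmt_1 {V : Type*} {ι : Type*} (B : SimpleGraph V) (W U : Set V)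
    (hbip : IsBipartition B W U)
    (T : SimpleGraph ι) (r : ι) (hT : T.IsTree) (β : ι → Set V)
    (hD : IsTreeDecompOn B Set.univ T β) (hnice : IsNice T r β)
    (v s : V) (hvW : v ∈ W) (hsU : s ∈ U) (hvs : v ∈ B.neighborSet s)
    (hQ : {t | v ∈ fakeSet B W U T r β t ∧ s ∈ β t}.Nonempty)
    (x z y : ι) (hx : IsForgetNode T r β v x)
    (hz : IsForgetNode T r β s z) (hy : IsChild T r z y) :
    Desc T r y x ∧
      ∀ p : T.Walk x y, p.IsPath →
        {t | v ∈ fakeSet B W U T r β t ∧ s ∈ β t} = {t | t ∈ p.support} :=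
  stmt_1_general B W U T r hT β hD v s hsU hvs hQ x z y hx hz hy
end

section
/- Let B be a simple bipartite graph with bipartition V(B) = W ⊎ U, G its half-square, D = (T, β_D) a nice tree decomposition of B, and D' = (T, β_{D'}) the derived decomposition of G. Let s ∈ U and K = N_B(s) be the corresponding special clique of G. Then there exists a linear ordering x_1, …, x_m of the vertices of K such that for every node t of T there is a (possibly empty) set I of consecutive elements of this ordering with Fake(t) ∩ K ⊆ I and I ∩ (K ∖ γ_{D'}(t)) = ∅. -/
/-!
Choose for every vertex `a` of `K` a node `home a` whose bag contains `a`, and order `K` by the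
list of ancestors of `home a`, read from the root, compared lexicographically (a depth-first
order). The nodes below `t` are those whose ancestor list extends that of `t`, and the lists
extending a fixed one form a lexicographic interval; so the vertices of `K` homed below `t` form
a block `I` of consecutive positions.

A fake vertex `a` of `t` lies in `γ_D(t)` but not in `β_D(t)`. The nodes whose bags contain `a`
form a subtree that avoids `t` and meets the subtree of `t`, so it lies entirely below `t`, and
`a ∈ I`. Conversely every `a ∈ I` lies in `W` and in the bag of `home a`, a node below `t`,
hence in `γ_{D'}(t)`.
-/

open SimpleGraph

theorem List.ordConnected_setOf_prefix {α : Type*} [LinearOrder α] (p : List α) :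
    {l | p <+: l}.OrdConnected := by
  refine Set.ordConnected_def.2 ?_
  rintro l₁ h₁ l₃ h₃ l₂ ⟨h₁₂, h₂₃⟩
  rw [← not_lt] at h₁₂ h₂₃
  induction p generalizing l₁ l₂ l₃ with
  | nil => exact List.nil_prefix
  | cons a p ih =>
    obtain ⟨s₁, rfl⟩ := h₁
    obtain ⟨s₃, rfl⟩ := h₃
    rcases l₂ with _ | ⟨b, l₂⟩
    · exact absurd List.Lex.nil h₁₂
    rcases lt_trichotomy a b with hab | rfl | hba
    · exact absurd (List.Lex.rel hab) h₂₃
    · exact List.cons_prefix_cons.2 ⟨rfl, ih (List.prefix_append _ _) (List.prefix_append _ _)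
        (fun h => h₁₂ (List.Lex.cons h)) (fun h => h₂₃ (List.Lex.cons h))⟩
    · exact absurd (List.Lex.rel hba) h₁₂

theorem Fin.exists_eq_setOf_le_lt_of_ordConnected {m : ℕ} {S : Set (Fin m)}
    (hS : S.OrdConnected) : ∃ lo hi : ℕ, {i : Fin m | lo ≤ (i : ℕ) ∧ (i : ℕ) < hi} = S := by
  rcases S.eq_empty_or_nonempty with rfl | ⟨i, hi⟩
  · exact ⟨0, 0, by simp⟩
  have : NeZero m := ⟨i.pos.ne'⟩
  refine ⟨(sInf S : Fin m), (sSup S : Fin m) + 1, ?_⟩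
  conv_rhs => rw [(Set.nonempty_of_mem hi).ordConnected_iff_of_bdd'.1 hS]
  ext j
  simp only [Set.mem_ofPred_eq, Set.mem_Icc, Fin.le_def, Nat.lt_succ_iff]

theorem Set.Finite.exists_enum_image_Ico_eq_inter_preimage {α β : Type*} [LinearOrder β]
    {K : Set α} (hK : K.Finite) (g : α → β) :
    ∃ (m : ℕ) (x : Fin m → α), Function.Injective x ∧ Set.range x = K ∧
      ∀ C : Set β, C.OrdConnected →
        ∃ lo hi : ℕ, x '' {i | lo ≤ (i : ℕ) ∧ (i : ℕ) < hi} = K ∩ g ⁻¹' C := by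
  obtain ⟨m, e, he⟩ := hK.fin_embedding
  let σ := Tuple.sort (g ∘ e)
  have hrange : Set.range (e ∘ σ) = K := by
    rw [Set.range_comp, σ.range_eq_univ, Set.image_univ, he]
  refine ⟨m, e ∘ σ, e.injective.comp σ.injective, hrange, fun C hC => ?_⟩
  obtain ⟨lo, hi, hI⟩ := Fin.exists_eq_setOf_le_lt_of_ordConnected
    (hC.preimage_mono (Tuple.monotone_sort (g ∘ e)))
  refine ⟨lo, hi, ?_⟩
  rw [hI, show (g ∘ e) ∘ σ = g ∘ (e ∘ σ) from rfl, Set.preimage_comp,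
    Set.image_preimage_eq_range_inter, hrange]

section Descendants

variable {ι : Type*} {T : SimpleGraph ι} {r t u : ι}

theorem desc_iff_forall_walk : Desc T r t u ↔ ∀ p : T.Walk u r, t ∈ p.support := by
  classical
  exact ⟨fun h p => p.support_bypass_subset_support (h _ p.bypass_isPath), fun h p _ => h p⟩

theorem Desc.of_induce_preconnected {S : Set ι} (hS : (T.induce S).Preconnected) (htS : t ∉ S)
    {t₁ : ι} (ht₁ : t₁ ∈ S) (hu : u ∈ S) (h : Desc T r t t₁) : Desc T r t u := by
  rw [desc_iff_forall_walk] at h ⊢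
  intro p
  obtain ⟨w⟩ := hS ⟨t₁, ht₁⟩ ⟨u, hu⟩
  have hw : t ∉ (w.map (Embedding.induce S).toHom).support := by
    rw [Walk.support_map, List.mem_map]
    rintro ⟨v, -, rfl⟩
    exact htS v.2
  exact ((Walk.mem_support_append_iff _ p).1 (h (.append _ p))).resolve_left hw

theorem SimpleGraph.IsTree.exists_desc_iff_prefix (hT : T.IsTree) (r : ι) :
    ∃ anc : ι → List ι, ∀ t u, Desc T r t u ↔ anc t <+: anc u := by
  classical
  choose p hp hp' using (hT.existsUnique_path · r)
  refine ⟨fun u => (p u).support.reverse, fun t u => ?_⟩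
  rw [List.reverse_prefix]
  constructor
  · intro h
    have ht : t ∈ (p u).support := h _ (hp u)
    rw [← hp' t _ ((hp u).dropUntil ht)]
    exact (p u).support_dropUntil_suffix_support ht
  · intro h q hq
    rw [hp' u q hq]
    exact h.subset (p t).start_mem_support

end Descendants

section DerivedDecomposition

variable {V ι : Type*} {B : SimpleGraph V} {W U : Set V} {T : SimpleGraph ι} {r t u : ι}
  {β : ι → Set V} {a : V}

theorem IsBipartition.neighborSet_subset (hbip : IsBipartition B W U) {s : V} (hs : s ∈ U) :
    B.neighborSet s ⊆ W := fun a ha => by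
  rcases hbip.2.2 ha with ⟨hsW, -⟩ | ⟨-, haW⟩
  · exact absurd ⟨hsW, hs⟩ (hbip.2.1 s)
  · exact haW

theorem mem_gammaSet_of_mem_fakeSet (ha : a ∈ fakeSet B W U T r β t) :
    a ∈ gammaSet T r β t := by
  obtain ⟨haW | haU, haβ⟩ := ha
  · exact absurd haW.1 haβ
  · obtain ⟨s, -, -, ha⟩ := Set.mem_iUnion₂.1 haU
    exact ha

theorem IsTreeDecompOn.desc_of_mem_fakeSet {H : SimpleGraph V} {S : Set V}
    (hD : IsTreeDecompOn H S T β) (haS : a ∈ S) (ha : a ∈ fakeSet B W U T r β t)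
    (hu : a ∈ β u) : Desc T r t u := by
  obtain ⟨t₁, ht₁, ha₁⟩ := Set.mem_iUnion₂.1 (mem_gammaSet_of_mem_fakeSet ha)
  exact Desc.of_induce_preconnected (hD.conn a haS).preconnected ha.2 ha₁ hu ht₁

theorem mem_gammaSet_derivedBag_of_desc (haW : a ∈ W) (hu : a ∈ β u) (htu : Desc T r t u) :
    a ∈ gammaSet T r (derivedBag B W U T r β) t :=
  Set.mem_biUnion htu (Or.inl ⟨hu, haW⟩)

end DerivedDecomposition

theorem stmt_8_general {V : Type*} {ι : Type*} [Fintype V] (B : SimpleGraph V) (W U : Set V)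
    (hbip : IsBipartition B W U)
    (T : SimpleGraph ι) (r : ι) (hT : T.IsTree) (β : ι → Set V)
    (hD : IsTreeDecompOn B Set.univ T β)
    (s₀ : V) (hs₀ : s₀ ∈ U) :
    ∃ (m : ℕ) (x : Fin m → V), Function.Injective x ∧
      Set.range x = B.neighborSet s₀ ∧
      ∀ t : ι, ∃ lo hi : ℕ,
        fakeSet B W U T r β t ∩ B.neighborSet s₀
            ⊆ x '' {i | lo ≤ (i : ℕ) ∧ (i : ℕ) < hi} ∧
        (x '' {i | lo ≤ (i : ℕ) ∧ (i : ℕ) < hi}) ∩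
            (B.neighborSet s₀ \ gammaSet T r (derivedBag B W U T r β) t) = ∅ := by
  let _ : LinearOrder ι := IsWellOrder.linearOrder WellOrderingRel
  obtain ⟨anc, hanc⟩ := hT.exists_desc_iff_prefix r
  choose home hhome using fun a : V => hD.covers a (Set.mem_univ a)
  obtain ⟨m, x, hinj, hrange, hblock⟩ :=
    (Set.toFinite (B.neighborSet s₀)).exists_enum_image_Ico_eq_inter_preimage (anc ∘ home)
  refine ⟨m, x, hinj, hrange, fun t => ?_⟩
  obtain ⟨lo, hi, hI⟩ := hblock _ (List.ordConnected_setOf_prefix (anc t))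
  refine ⟨lo, hi, ?_, ?_⟩ <;> rw [hI]
  · rintro a ⟨hfake, haK⟩
    exact ⟨haK, (hanc _ _).1 (hD.desc_of_mem_fakeSet (Set.mem_univ a) hfake (hhome a))⟩
  · refine Set.eq_empty_iff_forall_notMem.2 ?_
    rintro a ⟨⟨haK, hdesc⟩, -, hγ⟩
    exact hγ (mem_gammaSet_derivedBag_of_desc (hbip.neighborSet_subset hs₀ haK) (hhome a)
      ((hanc _ _).2 hdesc))

/-- for each special clique `K = N_B(s)` there is a linear
ordering of `K` such that for every node `t` some set of consecutive elements
contains `Fake(t) ∩ K` and avoids `K ∖ γ_{D'}(t)`. -/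
theorem stmt_8 {V : Type*} {ι : Type*} [Fintype V] (B : SimpleGraph V) (W U : Set V)
    (hbip : IsBipartition B W U)
    (T : SimpleGraph ι) (r : ι) (hT : T.IsTree) (β : ι → Set V)
    (hD : IsTreeDecompOn B Set.univ T β) (hnice : IsNice T r β)
    (s₀ : V) (hs₀ : s₀ ∈ U) :
    ∃ (m : ℕ) (x : Fin m → V), Function.Injective x ∧
      Set.range x = B.neighborSet s₀ ∧
      ∀ t : ι, ∃ lo hi : ℕ,
        fakeSet B W U T r β t ∩ B.neighborSet s₀
            ⊆ x '' {i | lo ≤ (i : ℕ) ∧ (i : ℕ) < hi} ∧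
        (x '' {i | lo ≤ (i : ℕ) ∧ (i : ℕ) < hi}) ∩
            (B.neighborSet s₀ \ gammaSet T r (derivedBag B W U T r β) t) = ∅ :=
  stmt_8_general B W U hbip T r hT β hD s₀ hs₀
end

section
/- Let A_1, …, A_q be finite sets, each of size 1 or 2, such that at most one of them has size 1 and every element lies in at most two of the sets A_1, …, A_q. Then {A_1, …, A_q} has a system of distinct representatives; that is, there exist pairwise distinct elements a_1, …, a_q with a_i ∈ A_i for every i ∈ {1, …, q}. -/
open SimpleGraph

/-
By Hall's theorem it suffices to show `|S| ≤ |⋃_{i ∈ S} A_i|` for every set `S` of indices.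
Counting incidences, `∑_{i ∈ S} |A_i|` is at most `2 |⋃_{i ∈ S} A_i|`, because every element
lies in at most two of the sets, and at least `2 |S| - 1`, because at most one of the sets is a
singleton. Hence `2 |S| ≤ 2 |⋃_{i ∈ S} A_i| + 1`, which forces `|S| ≤ |⋃_{i ∈ S} A_i|`.
-/

namespace Finset

theorem sum_card_le_mul_card_biUnion {ι α : Type*} [Fintype ι] [DecidableEq ι] [DecidableEq α]
    (A : ι → Finset α) (s : Finset ι) {k : ℕ} (hk : ∀ x, #{i | x ∈ A i} ≤ k) :
    ∑ i ∈ s, #(A i) ≤ k * #(s.biUnion A) := by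
  rw [sum_card_eq_sum_biUnion_card, mul_comm, ← smul_eq_mul]
  refine sum_le_card_nsmul _ _ _ fun x _ => (card_le_card ?_).trans (hk x)
  intro i
  simp only [mem_filter, mem_univ, true_and]
  exact And.right

theorem two_mul_card_le_sum_add_one {ι : Type*} [DecidableEq ι] (s : Finset ι) (f : ι → ℕ)
    (hpos : ∀ i ∈ s, 1 ≤ f i) (hsmall : ∀ i ∈ s, ∀ j ∈ s, f i < 2 → f j < 2 → i = j) :
    2 * #s ≤ ∑ i ∈ s, f i + 1 := by
  by_cases h : ∃ i ∈ s, f i < 2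
  · obtain ⟨i, hi, hfi⟩ := h
    have hrest : ∀ j ∈ s.erase i, 2 ≤ f j := fun j hj => by
      by_contra! hfj
      exact (mem_erase.mp hj).1 (hsmall j (mem_of_mem_erase hj) i hi hfj hfi)
    have := card_nsmul_le_sum _ _ _ hrest
    rw [← add_sum_erase s f hi, ← card_erase_add_one hi]
    simp only [smul_eq_mul] at this
    linarith [hpos i hi]
  · push Not at h
    have := card_nsmul_le_sum s f 2 h
    rw [smul_eq_mul] at this
    linarith

end Finset

open Finset

theorem stmt_12_general {α : Type*} (q : ℕ) (A : Fin q → Finset α)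
    (hcard : ∀ i, (A i).card = 1 ∨ (A i).card = 2)
    (hone : ∀ i j, (A i).card = 1 → (A j).card = 1 → i = j)
    (htwo : ∀ x : α, ({i | x ∈ A i} : Set (Fin q)).ncard ≤ 2) :
    ∃ a : Fin q → α, Function.Injective a ∧ ∀ i, a i ∈ A i := by
  classical
  refine (all_card_le_biUnion_card_iff_exists_injective A).mp fun s => ?_
  have hupper : ∑ i ∈ s, #(A i) ≤ 2 * #(s.biUnion A) :=
    sum_card_le_mul_card_biUnion A s fun x => by simpa [← Set.ncard_coe_finset] using htwo x
  have hlower : 2 * #s ≤ ∑ i ∈ s, #(A i) + 1 :=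
    two_mul_card_le_sum_add_one s _ (fun i _ => by rcases hcard i with h | h <;> omega)
      fun i _ j _ hi hj => hone i j (by have := hcard i; omega) (by have := hcard j; omega)
  omega

/-- a collection of sets, each of size 1 or 2, with at most one
set of size 1 and every element appearing in at most two of the sets, has a
system of distinct representatives. -/
theorem stmt_12 {α : Type*} [DecidableEq α] (q : ℕ) (A : Fin q → Finset α)
    (hcard : ∀ i, (A i).card = 1 ∨ (A i).card = 2)
    (hone : ∀ i j, (A i).card = 1 → (A j).card = 1 → i = j)
    (htwo : ∀ x : α, ({i | x ∈ A i} : Set (Fin q)).ncard ≤ 2) :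
    ∃ a : Fin q → α, Function.Injective a ∧ ∀ i, a i ∈ A i :=
  stmt_12_general q A hcard hone htwo
end
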